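/- Let Ω ⊂ ℝ^N be a bounded domain with mean convex boundary and let ψ₁ > 0 be a first Dirichlet eigenfunction of −Δ on Ω with eigenvalue λ₁(Ω), normalized with M₁ = max ψ₁, satisfying the gradient bound |∇ψ₁|² ≤ λ₁(Ω)(M₁² − ψ₁²) on cl Ω. Then any maximum point z of ψ₁ satisfies d_Γ(z) ≥ π/(2√(λ₁(Ω))). -/

import Mathlib

/-! If `y` is a boundary point nearest to `z`, the open segment from `z` to `y` lies in `Ω`.
Along it, `arcsin (ψ / M)` falls from `π / 2` to `0`, while the gradient bound makes its
derivative at most `√λ · |y - z|` in absolute value, so the mean value theorem gives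
`π / 2 ≤ √λ · |y - z|`. -/

open Metric Set
open scoped Classical

noncomputable def laplacian {N : ℕ} (u : EuclideanSpace ℝ (Fin N) → ℝ)
    (x : EuclideanSpace ℝ (Fin N)) : ℝ :=
  ∑ i : Fin N, fderiv ℝ (fun y => fderiv ℝ u y (EuclideanSpace.single i 1)) x
    (EuclideanSpace.single i 1)

/-- The signed distance to the boundary of `Ω`: positive inside, negative outside. -/
noncomputable def signedDistFrontier {N : ℕ} (Ω : Set (EuclideanSpace ℝ (Fin N)))
    (x : EuclideanSpace ℝ (Fin N)) : ℝ :=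
  if x ∈ Ω then infDist x (frontier Ω) else -infDist x (frontier Ω)

/-- `Ω` has a mean convex `C²` boundary: the signed distance function is `C²` near the
boundary, and its Laplacian is nonpositive on the boundary.  (For a `C²` boundary,
`Δ d = -(N-1) M` on `Γ`, where `M` is the mean curvature with respect to the inward
normal, so this says `M ≥ 0`.) -/
def MeanConvexBoundary {N : ℕ} (Ω : Set (EuclideanSpace ℝ (Fin N))) : Prop :=
  ∃ V : Set (EuclideanSpace ℝ (Fin N)), IsOpen V ∧ frontier Ω ⊆ V ∧
    ContDiffOn ℝ 2 (signedDistFrontier Ω) V ∧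
    ∀ y ∈ frontier Ω, laplacian (signedDistFrontier Ω) y ≤ 0

open Real AffineMap

theorem exists_last_mem_Icc_eq {α : Type*} [TopologicalSpace α] [T1Space α] {f : ℝ → α}
    {a b : ℝ} {c : α} (hab : a ≤ b) (hf : ContinuousOn f (Icc a b)) (ha : f a = c) :
    ∃ t₀ ∈ Icc a b, f t₀ = c ∧ ∀ t ∈ Ioc t₀ b, f t ≠ c := by
  have hclosed : IsClosed (Icc a b ∩ f ⁻¹' {c}) :=
    hf.preimage_isClosed_of_isClosed isClosed_Icc isClosed_singleton
  obtain ⟨t₀, ⟨ht₀, hft₀⟩, hlast⟩ :=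
    (isCompact_Icc.of_isClosed_subset hclosed inter_subset_left).exists_isGreatest
      ⟨a, left_mem_Icc.2 hab, ha⟩
  refine ⟨t₀, ht₀, hft₀, fun t ht hft => ?_⟩
  exact not_le.2 ht.1 (hlast ⟨⟨ht₀.1.trans ht.1.le, ht.2⟩, hft⟩)

theorem pi_div_two_le_mul_of_abs_deriv_le_of_abs_lt {g g' : ℝ → ℝ} {a b M L : ℝ}
    (hab : a < b) (hM : 0 < M) (hg : ContinuousOn g (Icc a b)) (ha : g a = M) (hb : g b = 0)
    (hg' : ∀ t ∈ Ioo a b, HasDerivAt g (g' t) t) (hlt : ∀ t ∈ Ioo a b, |g t| < M)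
    (hbound : ∀ t ∈ Ioo a b, |g' t| ≤ L * √(M ^ 2 - g t ^ 2)) :
    π / 2 ≤ L * (b - a) := by
  have hsqrt (x : ℝ) : √(M ^ 2 - x ^ 2) = M * √(1 - (x / M) ^ 2) := by
    rw [← sqrt_sq hM.le, ← sqrt_mul (sq_nonneg M), sqrt_sq hM.le]
    congr 1
    field_simp
  have harcsin : ∀ t ∈ Ioo a b,
      HasDerivAt (fun s => arcsin (g s / M)) (g' t / √(M ^ 2 - g t ^ 2)) t := by
    intro t ht
    obtain ⟨hlo, hhi⟩ := abs_lt.1 (hlt t ht)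
    have h₁ : -1 < g t / M := by rw [lt_div_iff₀ hM]; linarith
    have h₂ : g t / M < 1 := (div_lt_one hM).2 hhi
    refine ((hasDerivAt_arcsin h₁.ne' h₂.ne).comp t ((hg' t ht).div_const M)).congr_deriv ?_
    rw [hsqrt]
    field_simp
  obtain ⟨c, hc, hslope⟩ := exists_hasDerivAt_eq_slope (fun s => arcsin (g s / M)) _ hab
    (continuous_arcsin.comp_continuousOn (hg.div_const M)) harcsin
  simp only [ha, hb, div_self hM.ne', zero_div, arcsin_one, arcsin_zero] at hslope
  have hroot : 0 < √(M ^ 2 - g c ^ 2) := by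
    have hgc := hlt c hc
    exact sqrt_pos.2 (by nlinarith [abs_nonneg (g c), sq_abs (g c)])
  calc π / 2 = -(g' c / √(M ^ 2 - g c ^ 2)) * (b - a) := by
        rw [hslope]; field_simp [(sub_pos.2 hab).ne']; ring
    _ ≤ |g' c| / √(M ^ 2 - g c ^ 2) * (b - a) := by
        gcongr
        rw [← abs_of_pos hroot, ← abs_div, abs_of_pos hroot]
        exact neg_le_abs _
    _ ≤ L * (b - a) := by
        gcongr
        exact (div_le_iff₀ hroot).2 (hbound c hc)

theorem pi_div_two_le_mul_of_abs_deriv_le {g g' : ℝ → ℝ} {a b M L : ℝ} (hab : a ≤ b)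
    (hM : 0 < M) (hg : ContinuousOn g (Icc a b)) (ha : g a = M) (hb : g b = 0)
    (hg' : ∀ t ∈ Ioo a b, HasDerivAt g (g' t) t) (hmem : ∀ t ∈ Ioo a b, g t ∈ Ioc (-M) M)
    (hbound : ∀ t ∈ Ioo a b, |g' t| ≤ L * √(M ^ 2 - g t ^ 2)) :
    π / 2 ≤ L * (b - a) := by
  -- `arcsin` is not differentiable at `1`: start after the last time `g` reaches `M`.
  obtain ⟨t₀, ht₀, hgt₀, hlast⟩ := exists_last_mem_Icc_eq hab hg ha
  have ht₀b : t₀ < b := ht₀.2.lt_of_ne fun h => by rw [h, hb] at hgt₀; exact hM.ne hgt₀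
  have hsub : Ioo t₀ b ⊆ Ioo a b := Ioo_subset_Ioo_left ht₀.1
  have hstrict : π / 2 ≤ L * (b - t₀) :=
    pi_div_two_le_mul_of_abs_deriv_le_of_abs_lt ht₀b hM (hg.mono (Icc_subset_Icc_left ht₀.1))
      hgt₀ hb (fun t ht => hg' t (hsub ht))
      (fun t ht => abs_lt.2 ⟨(hmem t (hsub ht)).1,
        (hmem t (hsub ht)).2.lt_of_ne (hlast t (Ioo_subset_Ioc_self ht))⟩)
      (fun t ht => hbound t (hsub ht))
  have hL : 0 ≤ L := by
    by_contra! hL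
    nlinarith [pi_pos]
  nlinarith [ht₀.1]

theorem pi_div_two_le_sqrt_mul_dist_of_norm_gradient_sq_le {E : Type*} [NormedAddCommGroup E]
    [InnerProductSpace ℝ E] [CompleteSpace E] {f : E → ℝ} {y z : E} {M lam : ℝ} (hM : 0 < M)
    (hf : ContinuousOn f (segment ℝ z y))
    (hdiff : ∀ x ∈ openSegment ℝ z y, DifferentiableAt ℝ f x)
    (hz : f z = M) (hy : f y = 0) (hmem : ∀ x ∈ openSegment ℝ z y, f x ∈ Ioc (-M) M)
    (hgrad : ∀ x ∈ openSegment ℝ z y, ‖gradient f x‖ ^ 2 ≤ lam * (M ^ 2 - f x ^ 2)) :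
    π / 2 ≤ √lam * dist z y := by
  have hopen : ∀ t ∈ Ioo (0 : ℝ) 1, lineMap z y t ∈ openSegment ℝ z y := fun t ht =>
    openSegment_eq_image_lineMap ℝ z y ▸ mem_image_of_mem _ ht
  have hbound : ∀ x ∈ openSegment ℝ z y,
      |fderiv ℝ f x (y - z)| ≤ √lam * dist z y * √(M ^ 2 - f x ^ 2) := by
    intro x hx
    have hnorm : ‖gradient f x‖ ≤ √lam * √(M ^ 2 - f x ^ 2) := by
      have hsq : 0 ≤ M ^ 2 - f x ^ 2 := by
        obtain ⟨hlo, hhi⟩ := hmem x hx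
        nlinarith
      rw [← sqrt_mul' _ hsq, ← abs_norm]
      exact abs_le_sqrt (hgrad x hx)
    calc |fderiv ℝ f x (y - z)| = |inner ℝ (gradient f x) (y - z)| := by
          rw [inner_gradient_left]
      _ ≤ ‖gradient f x‖ * ‖y - z‖ := abs_real_inner_le_norm _ _
      _ ≤ √lam * √(M ^ 2 - f x ^ 2) * dist z y := by
          rw [← dist_eq_norm', dist_comm]
          gcongr
      _ = √lam * dist z y * √(M ^ 2 - f x ^ 2) := by ring
  simpa using pi_div_two_le_mul_of_abs_deriv_le (g := fun t => f (lineMap z y t))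
    (g' := fun t => fderiv ℝ f (lineMap z y t) (y - z)) zero_le_one hM
    (hf.comp (lineMap_continuous (R := ℝ)).continuousOn fun t ht =>
      segment_eq_image_lineMap ℝ z y ▸ mem_image_of_mem _ ht)
    (by simpa using hz) (by simpa using hy)
    (fun t ht => (hdiff _ (hopen t ht)).hasFDerivAt.comp_hasDerivAt t hasDerivAt_lineMap)
    (fun t ht => hmem _ (hopen t ht)) (fun t ht => hbound _ (hopen t ht))

theorem stmt_8_general {N : ℕ} (hN : 2 ≤ N) (Ω : Set (EuclideanSpace ℝ (Fin N)))
    (hΩopen : IsOpen Ω) (hΩbdd : Bornology.IsBounded Ω)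
    (ψ : EuclideanSpace ℝ (Fin N) → ℝ) (lam : ℝ) (hlam : 0 < lam)
    (hψ_C1 : ContDiffOn ℝ 1 ψ (closure Ω))
    (hpos : ∀ x ∈ Ω, 0 < ψ x)
    (hbdry : ∀ x ∈ frontier Ω, ψ x = 0)
    (z : EuclideanSpace ℝ (Fin N)) (hz : z ∈ Ω)
    (hzmax : ∀ x ∈ closure Ω, ψ x ≤ ψ z)
    (hgrad : ∀ x ∈ closure Ω, ‖gradient ψ x‖ ^ 2 ≤ lam * ((ψ z) ^ 2 - (ψ x) ^ 2)) :
    infDist z (frontier Ω) ≥ Real.pi / (2 * Real.sqrt lam) := by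
  have hψz : 0 < ψ z := hpos z hz
  have : Nontrivial (EuclideanSpace ℝ (Fin N)) :=
    Module.nontrivial_of_finrank_pos (R := ℝ) (by rw [finrank_euclideanSpace_fin]; omega)
  have hΩne : Ω ≠ univ := fun h => NormedSpace.unbounded_univ ℝ _ (h ▸ hΩbdd)
  obtain ⟨y, hy, hdist⟩ := exists_mem_frontier_infDist_compl_eq_dist hz hΩne
  have hdisj : Disjoint (frontier Ω) Ω := disjoint_frontier_iff_isOpen.2 hΩopen
  have hopen : openSegment ℝ z y ⊆ Ω :=
    (openSegment_subset_ball_of_ne (mem_closedBall_self dist_nonneg)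
      (mem_closedBall'.2 le_rfl) (hdisj.ne_of_mem hy hz).symm).trans
      (hdist ▸ ball_infDist_compl_subset)
  have hseg : segment ℝ z y ⊆ closure Ω :=
    segment_subset_closure_openSegment.trans (closure_mono hopen)
  have hψdiff : DifferentiableOn ℝ ψ Ω :=
    (hψ_C1.mono subset_closure).differentiableOn one_ne_zero
  have key : π / 2 ≤ √lam * dist z y :=
    pi_div_two_le_sqrt_mul_dist_of_norm_gradient_sq_le hψz (hψ_C1.continuousOn.mono hseg)
      (fun x hx => hψdiff.differentiableAt (hΩopen.mem_nhds (hopen hx))) rfl (hbdry y hy)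
      (fun x hx => ⟨by linarith [hpos x (hopen hx)], hzmax x (subset_closure (hopen hx))⟩)
      (fun x hx => hgrad x (subset_closure (hopen hx)))
  have hcompl : infDist z Ωᶜ ≤ infDist z (frontier Ω) :=
    infDist_le_infDist_of_subset hdisj.subset_compl_right ⟨y, hy⟩
  rw [ge_iff_le, div_le_iff₀ (by positivity)]
  nlinarith [sqrt_nonneg lam]

/-- for a bounded domain with mean convex boundary, a positive first
Dirichlet eigenfunction `ψ₁` (with maximum `M₁ = ψ₁ z`) satisfying the gradient bound
`|∇ψ₁|² ≤ λ₁(M₁² − ψ₁²)` has its maximum point `z` at distance at least `π/(2√λ₁)`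
from the boundary. -/
theorem stmt_8 {N : ℕ} (hN : 2 ≤ N) (Ω : Set (EuclideanSpace ℝ (Fin N)))
    (hΩopen : IsOpen Ω) (hΩconn : IsConnected Ω) (hΩbdd : Bornology.IsBounded Ω)
    (hmc : MeanConvexBoundary Ω)
    (ψ : EuclideanSpace ℝ (Fin N) → ℝ) (lam : ℝ) (hlam : 0 < lam)
    (hψ_C1 : ContDiffOn ℝ 1 ψ (closure Ω))
    (hψ_C2 : ContDiffOn ℝ 2 ψ Ω)
    (heig : ∀ x ∈ Ω, laplacian ψ x + lam * ψ x = 0)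
    (hpos : ∀ x ∈ Ω, 0 < ψ x)
    (hbdry : ∀ x ∈ frontier Ω, ψ x = 0)
    (z : EuclideanSpace ℝ (Fin N)) (hz : z ∈ Ω)
    (hzmax : ∀ x ∈ closure Ω, ψ x ≤ ψ z)
    (hgrad : ∀ x ∈ closure Ω, ‖gradient ψ x‖ ^ 2 ≤ lam * ((ψ z) ^ 2 - (ψ x) ^ 2)) :
    infDist z (frontier Ω) ≥ Real.pi / (2 * Real.sqrt lam) :=
  stmt_8_general hN Ω hΩopen hΩbdd ψ lam hlam hψ_C1 hpos hbdry z hz hzmax hgrad
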